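/- Let γ > 1 and let Ŝ be a positive C² function of x. Define b₀ = K_c ((γ−1)/(γ(3γ−1))) ( Ŝ Ŝ_xx − ((3γ+1)/(3γ−1)) Ŝ_x² ) Ŝ^{−3(3−γ)/(2(3γ−1))} a^{3(γ+1)/(2(γ−1)) + 1} and b₂ = K_c ((γ+1)/(2(γ−1))) Ŝ^{3(3−γ)/(2(3γ−1))} a^{(3−γ)/(2(γ−1))}. Suppose at a given point: 0 < M_L ≤ Ŝ ≤ M_U, |Ŝ Ŝ_xx − ((3γ+1)/(3γ−1)) Ŝ_x²| ≤ M₃, and 0 < a ≤ E_U. Then b₂ > 0 and b₀/b₂ ≤ N², where N = √(2(γ−1)² M₃ / (γ(γ+1)(3γ−1))) · E_U^{(3γ−1)/(2(γ−1))} · M_L^{−3(3−γ)/(2(3γ−1))} if 1 < γ < 3, and N = √(2(γ−1)² M₃ / (γ(γ+1)(3γ−1))) · E_U^{(3γ−1)/(2(γ−1))} · M_U^{−3(3−γ)/(2(3γ−1))} if γ ≥ 3. -/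

import Mathlib

/- STATEMENT 9: Pointwise bound on the ratio b₀/b₂ of the Riccati coefficients:
under M_L ≤ Ŝ ≤ M_U, |ŜŜ_xx − ((3γ+1)/(3γ−1))Ŝ_x²| ≤ M₃ and 0 < a ≤ E_U, one has
b₂ > 0 and b₀/b₂ ≤ N². -/

noncomputable section
open Real

/-- `K_v = (2√(Kγ)/(γ−1))^{2/(γ−1)}`. -/
def KvC (K γ : ℝ) : ℝ := (2 * Real.sqrt (K * γ) / (γ - 1)) ^ (2 / (γ - 1))

/-- `K_c = √(Kγ) K_v^{−(γ+1)/2}`. -/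
def KcC (K γ : ℝ) : ℝ := Real.sqrt (K * γ) * KvC K γ ^ (-(γ + 1) / 2)

theorem statement9 (K γ M_L M_U M₃ E_U : ℝ)
    (hK : 0 < K) (hγ : 1 < γ)
    (hML : 0 < M_L) (hMLU : M_L ≤ M_U) (hM3 : 0 < M₃) (hEU : 0 < E_U)
    (Sh Shx Shxx a : ℝ)
    (hSl : M_L ≤ Sh) (hSu : Sh ≤ M_U)
    (hSxx : |Sh * Shxx - (3 * γ + 1) / (3 * γ - 1) * Shx ^ 2| ≤ M₃)
    (ha : 0 < a) (ha' : a ≤ E_U)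
    (b₀ b₂ N : ℝ)
    (hb0 : b₀ = KcC K γ * ((γ - 1) / (γ * (3 * γ - 1))) *
      (Sh * Shxx - (3 * γ + 1) / (3 * γ - 1) * Shx ^ 2) *
      Sh ^ (-(3 * (3 - γ)) / (2 * (3 * γ - 1))) *
      a ^ (3 * (γ + 1) / (2 * (γ - 1)) + 1))
    (hb2 : b₂ = KcC K γ * ((γ + 1) / (2 * (γ - 1))) *
      Sh ^ (3 * (3 - γ) / (2 * (3 * γ - 1))) * a ^ ((3 - γ) / (2 * (γ - 1))))
    (hN : N = Real.sqrt (2 * (γ - 1) ^ 2 * M₃ / (γ * (γ + 1) * (3 * γ - 1))) *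
      E_U ^ ((3 * γ - 1) / (2 * (γ - 1))) *
      (if γ < 3 then M_L else M_U) ^ (-(3 * (3 - γ)) / (2 * (3 * γ - 1)))) :
    0 < b₂ ∧ b₀ / b₂ ≤ N ^ 2 := by
  have hγ0 : (0:ℝ) < γ := by linarith
  have hγ1 : (0:ℝ) < γ - 1 := by linarith
  have h3γ : (0:ℝ) < 3 * γ - 1 := by linarith
  have hγp1 : (0:ℝ) < γ + 1 := by linarith
  have hS : 0 < Sh := lt_of_lt_of_le hML hSl
  have hKγ : (0:ℝ) < K * γ := by positivity
  have hsq : 0 < Real.sqrt (K * γ) := Real.sqrt_pos.mpr hKγ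
  have hKv : 0 < KvC K γ := by
    unfold KvC
    exact Real.rpow_pos_of_pos (by positivity) _
  have hc : 0 < KcC K γ := by
    unfold KcC
    exact mul_pos hsq (Real.rpow_pos_of_pos hKv _)
  have hb2pos : 0 < b₂ := by
    rw [hb2]
    exact mul_pos (mul_pos (mul_pos hc (div_pos hγp1 (by linarith)))
      (Real.rpow_pos_of_pos hS _)) (Real.rpow_pos_of_pos ha _)
  refine ⟨hb2pos, ?_⟩
  set D := Sh * Shxx - (3 * γ + 1) / (3 * γ - 1) * Shx ^ 2 with hD
  set M : ℝ := if γ < 3 then M_L else M_U with hMdef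
  have hM : 0 < M := by
    rw [hMdef]; split
    · exact hML
    · linarith
  have hγ1' : γ - 1 ≠ 0 := hγ1.ne'
  have h3γ' : 3 * γ - 1 ≠ 0 := h3γ.ne'
  have hγ0' : γ ≠ 0 := hγ0.ne'
  have hγp1' : γ + 1 ≠ 0 := hγp1.ne'
  -- split rpow exponents
  have eS : Sh ^ (-(3 * (3 - γ)) / (2 * (3 * γ - 1))) =
      Sh ^ (3 * (3 - γ) / (2 * (3 * γ - 1))) * Sh ^ (-(3 * (3 - γ)) / (3 * γ - 1)) := by
    rw [← Real.rpow_add hS]; congr 1; field_simp; ring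
  have eA : a ^ (3 * (γ + 1) / (2 * (γ - 1)) + 1) =
      a ^ ((3 - γ) / (2 * (γ - 1))) * a ^ ((3 * γ - 1) / (γ - 1)) := by
    rw [← Real.rpow_add ha]; congr 1; field_simp; ring
  have key : b₀ = b₂ * (2 * (γ - 1) ^ 2 / (γ * (γ + 1) * (3 * γ - 1)) * D *
      Sh ^ (-(3 * (3 - γ)) / (3 * γ - 1)) * a ^ ((3 * γ - 1) / (γ - 1))) := by
    rw [hb0, hb2, eS, eA]
    field_simp
  have hratio : b₀ / b₂ = 2 * (γ - 1) ^ 2 / (γ * (γ + 1) * (3 * γ - 1)) * D *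
      Sh ^ (-(3 * (3 - γ)) / (3 * γ - 1)) * a ^ ((3 * γ - 1) / (γ - 1)) := by
    rw [key, mul_div_cancel_left₀ _ hb2pos.ne']
  have sq_rpow : ∀ x e : ℝ, 0 ≤ x → (x ^ e) ^ 2 = x ^ (e * 2) := by
    intro x e hx
    rw [← Real.rpow_natCast (x ^ e) 2, ← Real.rpow_mul hx]
    norm_num
  have hdenom : 0 < γ * (γ + 1) * (3 * γ - 1) := mul_pos (mul_pos hγ0 hγp1) h3γ
  have hnn : 0 ≤ 2 * (γ - 1) ^ 2 * M₃ / (γ * (γ + 1) * (3 * γ - 1)) :=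
    div_nonneg (by positivity) hdenom.le
  have hNsq : N ^ 2 = 2 * (γ - 1) ^ 2 * M₃ / (γ * (γ + 1) * (3 * γ - 1)) *
      E_U ^ ((3 * γ - 1) / (γ - 1)) * M ^ (-(3 * (3 - γ)) / (3 * γ - 1)) := by
    rw [hN, mul_pow, mul_pow, Real.sq_sqrt hnn, sq_rpow E_U _ hEU.le, sq_rpow M _ hM.le,
      show (3 * γ - 1) / (2 * (γ - 1)) * 2 = (3 * γ - 1) / (γ - 1) by field_simp,
      show -(3 * (3 - γ)) / (2 * (3 * γ - 1)) * 2 = -(3 * (3 - γ)) / (3 * γ - 1) by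
        field_simp]
  have hDle : D ≤ M₃ := le_trans (le_abs_self _) hSxx
  have hae : a ^ ((3 * γ - 1) / (γ - 1)) ≤ E_U ^ ((3 * γ - 1) / (γ - 1)) :=
    Real.rpow_le_rpow ha.le ha' (div_nonneg (by linarith) (by linarith))
  have hSm : Sh ^ (-(3 * (3 - γ)) / (3 * γ - 1)) ≤ M ^ (-(3 * (3 - γ)) / (3 * γ - 1)) := by
    rw [hMdef]; split
    · next h3 =>
      exact Real.rpow_le_rpow_of_nonpos hML hSl
        (div_nonpos_of_nonpos_of_nonneg (by linarith) h3γ.le)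
    · next h3 =>
      exact Real.rpow_le_rpow hS.le hSu (div_nonneg (by linarith) h3γ.le)
  rw [hratio, hNsq]
  have hC : 0 ≤ 2 * (γ - 1) ^ 2 / (γ * (γ + 1) * (3 * γ - 1)) :=
    div_nonneg (by positivity) hdenom.le
  calc 2 * (γ - 1) ^ 2 / (γ * (γ + 1) * (3 * γ - 1)) * D *
      Sh ^ (-(3 * (3 - γ)) / (3 * γ - 1)) * a ^ ((3 * γ - 1) / (γ - 1))
      ≤ 2 * (γ - 1) ^ 2 / (γ * (γ + 1) * (3 * γ - 1)) * M₃ *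
        M ^ (-(3 * (3 - γ)) / (3 * γ - 1)) * E_U ^ ((3 * γ - 1) / (γ - 1)) := by
        have hCM : 0 ≤ 2 * (γ - 1) ^ 2 / (γ * (γ + 1) * (3 * γ - 1)) * M₃ :=
          mul_nonneg hC hM3.le
        have h1 : 2 * (γ - 1) ^ 2 / (γ * (γ + 1) * (3 * γ - 1)) * D *
            Sh ^ (-(3 * (3 - γ)) / (3 * γ - 1)) ≤
            2 * (γ - 1) ^ 2 / (γ * (γ + 1) * (3 * γ - 1)) * M₃ *
            M ^ (-(3 * (3 - γ)) / (3 * γ - 1)) :=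
          mul_le_mul (mul_le_mul_of_nonneg_left hDle hC) hSm
            (Real.rpow_pos_of_pos hS _).le hCM
        exact mul_le_mul h1 hae (Real.rpow_pos_of_pos ha _).le
          (mul_nonneg hCM (Real.rpow_pos_of_pos hM _).le)
    _ = 2 * (γ - 1) ^ 2 * M₃ / (γ * (γ + 1) * (3 * γ - 1)) *
        E_U ^ ((3 * γ - 1) / (γ - 1)) * M ^ (-(3 * (3 - γ)) / (3 * γ - 1)) := by ring
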